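/- arXiv:0809.4909 — 4 statements merged into one kernel-verified Lean document; each statement's English description precedes it below -/
import Mathlib

section
/- Let F be a d₂ × d₁ complex matrix with tr(F F*) = 1, let P_F = Σ_{i,j=1}^{d₁} E_{ij} ⊗ F E_{ij} F* (the rank-one orthogonal projection onto ψ_F = Σ_i e_i ⊗ F e_i), and let p ∈ M_{d₂}(ℂ) be an orthogonal projection with tr(p) = k. Then ‖(I_{d₁} ⊗ p) P_F (I_{d₁} ⊗ p)‖ = tr(p F F*), and consequently ‖(I_{d₁} ⊗ p) P_F (I_{d₁} ⊗ p)‖ ≤ g_k(F), the sum of the k largest eigenvalues of F F*. -/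
open scoped Kronecker ComplexOrder
open Matrix

/-- The operator norm (largest singular value) of a complex matrix. -/
noncomputable def opNorm {m n : Type*} [Fintype m] [Fintype n] [DecidableEq n]
    (A : Matrix m n ℂ) : ℝ :=
  ‖LinearMap.toContinuousLinearMap (Matrix.toEuclideanLin A)‖

/-- The sum of the `k` largest values of a function on a finite index type. -/
noncomputable def sumKLargest {n : Type*} [Fintype n] (k : ℕ) (f : n → ℝ) : ℝ :=
  sSup {x | ∃ s : Finset n, s.card = k ∧ x = ∑ i ∈ s, f i}

/-- `gk k F` is the sum of the `k` largest eigenvalues of `F * Fᴴ`. -/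
noncomputable def gk {d₂ d₁ : ℕ} (k : ℕ) (F : Matrix (Fin d₂) (Fin d₁) ℂ) : ℝ :=
  sumKLargest k (Matrix.isHermitian_mul_conjTranspose_self F).eigenvalues

/-!
`PF` is the rank-one operator `|vec F⟩⟨vec F|`, so compressing it by the Hermitian matrix
`1 ⊗ p` gives `|vec (p F)⟩⟨vec (p F)|`, whose norm is `‖vec (p F)‖² = tr (Fᴴ p F) = tr (p F Fᴴ)`.
In an eigenbasis of `F Fᴴ` this trace is `∑ cᵢ λᵢ`, where the `cᵢ` are the diagonal entries of the
conjugated projection: they lie in `[0, 1]` and add up to `tr p = k`. Such a weighted sum is at most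
the sum of the `k` largest `λᵢ`: a `k`-set `s` of maximal sum dominates its complement (exchange
argument), so some threshold `t` separates them, and then termwise
`cᵢ λᵢ ≤ 1ₛ(i) λᵢ + (cᵢ - 1ₛ(i)) t`, where the `t`-terms cancel because `∑ cᵢ = k`.
-/

section KyFan

variable {ι : Type*} [Fintype ι] (f : ι → ℝ)

lemma exists_card_eq_forall_notMem_le {k : ℕ} (hk : k ≤ Fintype.card ι) :
    ∃ s : Finset ι, s.card = k ∧ ∀ i ∈ s, ∀ j ∉ s, f j ≤ f i := by
  classical
  obtain ⟨s, hs, hmax⟩ := Finset.exists_max_image _ (fun s => ∑ i ∈ s, f i)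
    (Finset.powersetCard_nonempty.mpr hk : (Finset.univ.powersetCard k).Nonempty)
  obtain ⟨-, hcard⟩ := Finset.mem_powersetCard.mp hs
  refine ⟨s, hcard, fun i hi j hj => ?_⟩
  have hj' : j ∉ s.erase i := fun h => hj (Finset.mem_of_mem_erase h)
  have hswap := hmax (insert j (s.erase i)) <| Finset.mem_powersetCard.mpr
    ⟨Finset.subset_univ _, by
      rw [Finset.card_insert_of_notMem hj', Finset.card_erase_of_mem hi, hcard]
      have := Finset.card_pos.mpr ⟨i, hi⟩
      omega⟩
  rw [Finset.sum_insert hj', Finset.sum_erase_eq_sub hi] at hswap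
  linarith

lemma exists_threshold_of_forall_notMem_le {s : Finset ι} (hs : ∀ i ∈ s, ∀ j ∉ s, f j ≤ f i) :
    ∃ t, (∀ i ∈ s, t ≤ f i) ∧ ∀ j ∉ s, f j ≤ t := by
  rcases s.eq_empty_or_nonempty with rfl | hne
  · exact ⟨∑ j, |f j|, by simp, fun j _ =>
      (le_abs_self _).trans (Finset.single_le_sum (fun j _ => abs_nonneg (f j)) (Finset.mem_univ j))⟩
  · obtain ⟨i₀, hi₀, hmin⟩ := s.exists_min_image f hne
    exact ⟨f i₀, hmin, fun j hj => hs i₀ hi₀ j hj⟩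

variable {f}

lemma sum_mul_le_sum_of_threshold {c : ι → ℝ} {s : Finset ι} {t : ℝ} (hc0 : ∀ i, 0 ≤ c i)
    (hc1 : ∀ i, c i ≤ 1) (hcs : ∑ i, c i = s.card) (hts : ∀ i ∈ s, t ≤ f i)
    (hst : ∀ j ∉ s, f j ≤ t) :
    ∑ i, c i * f i ≤ ∑ i ∈ s, f i := by
  classical
  have hterm : ∀ i,
      c i * f i ≤ (if i ∈ s then f i else 0) + (c i - if i ∈ s then 1 else 0) * t := by
    intro i
    split_ifs with hi
    · nlinarith [hc1 i, hts i hi]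
    · nlinarith [hc0 i, hst i hi]
  calc ∑ i, c i * f i
      ≤ ∑ i, ((if i ∈ s then f i else 0) + (c i - if i ∈ s then 1 else 0) * t) :=
        Finset.sum_le_sum fun i _ => hterm i
    _ = ∑ i ∈ s, f i := by
        simp [Finset.sum_add_distrib, ← Finset.sum_mul, Finset.sum_sub_distrib, hcs]

lemma sum_mul_le_sumKLargest {c : ι → ℝ} {k : ℕ} (hc0 : ∀ i, 0 ≤ c i) (hc1 : ∀ i, c i ≤ 1)
    (hck : ∑ i, c i = k) :
    ∑ i, c i * f i ≤ sumKLargest k f := by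
  have hk : k ≤ Fintype.card ι := by
    have : (k : ℝ) ≤ Fintype.card ι := by
      simpa [← hck] using Finset.sum_le_sum fun i (_ : i ∈ Finset.univ) => hc1 i
    exact_mod_cast this
  obtain ⟨s, hs, hsep⟩ := exists_card_eq_forall_notMem_le f hk
  obtain ⟨t, hts, hst⟩ := exists_threshold_of_forall_notMem_le f hsep
  have hbdd : BddAbove {x | ∃ s : Finset ι, s.card = k ∧ x = ∑ i ∈ s, f i} :=
    (Set.finite_range fun s : Finset ι => ∑ i ∈ s, f i).bddAbove.mono
      (by rintro _ ⟨s, -, rfl⟩; exact ⟨s, rfl⟩)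
  exact (sum_mul_le_sum_of_threshold hc0 hc1 (hs ▸ hck) hts hst).trans
    (le_csSup hbdd ⟨s, hs, rfl⟩)

end KyFan

namespace Matrix

lemma sum_single_kronecker_mul_single_mul_conjTranspose {R m n : Type*} [CommSemiring R]
    [StarRing R] [Fintype m] [DecidableEq m] (F : Matrix n m R) :
    ∑ i, ∑ j, single i j (1 : R) ⊗ₖ (F * single i j (1 : R) * Fᴴ) =
      vecMulVec (vec F) (star (vec F)) := by
  ext ⟨a, b⟩ ⟨c, d⟩
  simp [Matrix.sum_apply, single_apply, vecMulVec_apply, mul_apply, ite_and]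

open scoped MatrixOrder

variable {n : Type*} [Fintype n]

lemma trace_conjStarAlgAut [DecidableEq n] (u : unitary (Matrix n n ℂ)) (M : Matrix n n ℂ) :
    (Unitary.conjStarAlgAut ℂ _ u M).trace = M.trace := by
  rw [Unitary.conjStarAlgAut_apply, trace_mul_cycle, Unitary.coe_star_mul_self, one_mul]

lemma IsHermitian.trace_mul_eq_sum [DecidableEq n] {H : Matrix n n ℂ} (hH : H.IsHermitian)
    (p : Matrix n n ℂ) :
    (p * H).trace =
      ∑ i, Unitary.conjStarAlgAut ℂ _ (star hH.eigenvectorUnitary) p i i * hH.eigenvalues i := by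
  rw [← trace_conjStarAlgAut (star hH.eigenvectorUnitary), map_mul,
    hH.conjStarAlgAut_star_eigenvectorUnitary, trace]
  simp [mul_diagonal]

lemma _root_.IsStarProjection.diag_mem_Icc [DecidableEq n] {q : Matrix n n ℂ}
    (hq : IsStarProjection q) (i : n) : q i i ∈ Set.Icc 0 1 := by
  refine ⟨(nonneg_iff_posSemidef.mp hq.nonneg).diag_nonneg, ?_⟩
  simpa [sub_nonneg] using (nonneg_iff_posSemidef.mp hq.one_sub_nonneg).diag_nonneg (i := i)

lemma _root_.IsStarProjection.re_trace_mul_le_sumKLargest [DecidableEq n] {H p : Matrix n n ℂ}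
    (hH : H.IsHermitian) (hp : IsStarProjection p) {k : ℕ} (hk : p.trace = k) :
    (p * H).trace.re ≤ sumKLargest k hH.eigenvalues := by
  set q := Unitary.conjStarAlgAut ℂ _ (star hH.eigenvectorUnitary) p
  have hq : IsStarProjection q := hp.map _
  have hqk : ∑ i, (q i i).re = k := by
    rw [← trace_conjStarAlgAut (star hH.eigenvectorUnitary)] at hk
    simpa only [trace, diag_apply, Complex.re_sum, Complex.natCast_re] using congrArg Complex.re hk
  rw [hH.trace_mul_eq_sum, Complex.re_sum]
  simp_rw [Complex.re_mul_ofReal]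
  refine sum_mul_le_sumKLargest (fun i => ?_) (fun i => ?_) hqk
  · exact (Complex.le_def.mp (hq.diag_mem_Icc i).1).1
  · exact (Complex.le_def.mp (hq.diag_mem_Icc i).2).1

lemma opNorm_vecMulVec_star [DecidableEq n] (x : n → ℂ) :
    opNorm (vecMulVec x (star x)) = ‖WithLp.toLp 2 x‖ ^ 2 := by
  rw [← InnerProductSpace.symm_toEuclideanLin_rankOne, opNorm, LinearEquiv.apply_symm_apply]
  exact (InnerProductSpace.norm_rankOne _ _).trans (sq _).symm

lemma ofReal_norm_toLp_vec_sq {m : Type*} [Fintype m] (A : Matrix m n ℂ) :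
    ((‖WithLp.toLp 2 (vec A)‖ ^ 2 : ℝ) : ℂ) = (Aᴴ * A).trace := by
  rw [← star_vec_dotProduct_vec, dotProduct_comm]
  exact_mod_cast (inner_self_eq_norm_sq_to_K (𝕜 := ℂ)
    (WithLp.toLp 2 (vec A) : EuclideanSpace ℂ (n × m))).symm

lemma IsHermitian.mul_vecMulVec_star_mul {M : Matrix n n ℂ} (hM : M.IsHermitian) (x : n → ℂ) :
    M * vecMulVec x (star x) * M = vecMulVec (M *ᵥ x) (star (M *ᵥ x)) := by
  rw [mul_vecMulVec, vecMulVec_mul, star_mulVec, hM.eq]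

end Matrix

theorem norm_compress_rankOne_proj_general (d₁ d₂ k : ℕ)
    (F : Matrix (Fin d₂) (Fin d₁) ℂ)
    (PF : Matrix (Fin d₁ × Fin d₂) (Fin d₁ × Fin d₂) ℂ)
    (hPF : PF = ∑ i : Fin d₁, ∑ j : Fin d₁,
      Matrix.single i j (1 : ℂ) ⊗ₖ (F * Matrix.single i j (1 : ℂ) * Fᴴ))
    (p : Matrix (Fin d₂) (Fin d₂) ℂ)
    (hp : p.IsHermitian) (hp2 : p * p = p) (hptr : p.trace = (k : ℂ))
    (Q : Matrix (Fin d₁ × Fin d₂) (Fin d₁ × Fin d₂) ℂ)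
    (hQ : Q = ((1 : Matrix (Fin d₁) (Fin d₁) ℂ) ⊗ₖ p) * PF *
      ((1 : Matrix (Fin d₁) (Fin d₁) ℂ) ⊗ₖ p)) :
    (opNorm Q : ℂ) = (p * (F * Fᴴ)).trace ∧ opNorm Q ≤ gk k F := by
  have hId : ((1 : Matrix (Fin d₁) (Fin d₁) ℂ) ⊗ₖ p).IsHermitian := by
    rw [IsHermitian, conjTranspose_kronecker, conjTranspose_one, hp.eq]
  have hQ' : Q = vecMulVec (vec (p * F)) (star (vec (p * F))) := by
    rw [hQ, hPF, sum_single_kronecker_mul_single_mul_conjTranspose, hId.mul_vecMulVec_star_mul,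
      ← vec_mul_eq_mulVec]
  have hnorm : (opNorm Q : ℂ) = (p * (F * Fᴴ)).trace := by
    rw [hQ', opNorm_vecMulVec_star, ofReal_norm_toLp_vec_sq, conjTranspose_mul, hp.eq,
      Matrix.mul_assoc, ← Matrix.mul_assoc p p F, hp2, trace_mul_comm, Matrix.mul_assoc]
  refine ⟨hnorm, ?_⟩
  rw [← Complex.ofReal_re (opNorm Q), hnorm]
  exact IsStarProjection.re_trace_mul_le_sumKLargest _ ⟨hp2, hp⟩ hptr

theorem norm_compress_rankOne_proj (d₁ d₂ k : ℕ)
    (F : Matrix (Fin d₂) (Fin d₁) ℂ) (hF : (F * Fᴴ).trace = 1)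
    (PF : Matrix (Fin d₁ × Fin d₂) (Fin d₁ × Fin d₂) ℂ)
    (hPF : PF = ∑ i : Fin d₁, ∑ j : Fin d₁,
      Matrix.single i j (1 : ℂ) ⊗ₖ (F * Matrix.single i j (1 : ℂ) * Fᴴ))
    (p : Matrix (Fin d₂) (Fin d₂) ℂ)
    (hp : p.IsHermitian) (hp2 : p * p = p) (hptr : p.trace = (k : ℂ))
    (Q : Matrix (Fin d₁ × Fin d₂) (Fin d₁ × Fin d₂) ℂ)
    (hQ : Q = ((1 : Matrix (Fin d₁) (Fin d₁) ℂ) ⊗ₖ p) * PF *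
      ((1 : Matrix (Fin d₁) (Fin d₁) ℂ) ⊗ₖ p)) :
    (opNorm Q : ℂ) = (p * (F * Fᴴ)).trace ∧ opNorm Q ≤ gk k F :=
  norm_compress_rankOne_proj_general d₁ d₂ k F PF hPF p hp hp2 hptr Q hQ
end

section
/- Let φ : M_{d₁}(ℂ) → M_{d₂}(ℂ) be a linear map satisfying φ(a*) = φ(a)*, with Choi matrix φ̂, and let d = min(d₁, d₂) and 1 ≤ k ≤ d. Then φ is k-positive if and only if tr(σ φ̂) ≥ 0 for every positive semidefinite σ on ℂ^{d₁} ⊗ ℂ^{d₂} that is a finite sum of rank-one operators |ψ⟩⟨ψ| with Schmidt rank SR(ψ) ≤ k. In particular: φ is positive (sends positive semidefinite matrices to positive semidefinite matrices) if and only if tr(σ φ̂) ≥ 0 for every separable σ, and φ is completely positive (d-positive) if and only if φ̂ is positive semidefinite. -/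
open scoped Kronecker ComplexOrder
open Matrix

/-- A linear map `φ : M_{d₁}(ℂ) → M_{d₂}(ℂ)` is `k`-positive if `id_k ⊗ φ` sends
positive semidefinite matrices to positive semidefinite matrices. -/
def kPositive (d₁ d₂ k : ℕ)
    (φ : Matrix (Fin d₁) (Fin d₁) ℂ →ₗ[ℂ] Matrix (Fin d₂) (Fin d₂) ℂ) : Prop :=
  ∀ a : Matrix (Fin k × Fin d₁) (Fin k × Fin d₁) ℂ, a.PosSemidef →
    (Matrix.of fun p q : Fin k × Fin d₂ =>
      φ (Matrix.of fun x y => a (p.1, x) (q.1, y)) p.2 q.2).PosSemidef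

/-- The Choi matrix `φ̂ = ∑ i j, E_{ij} ⊗ φ(E_{ij})`. -/
noncomputable def choiMatrix {d₁ d₂ : ℕ}
    (φ : Matrix (Fin d₁) (Fin d₁) ℂ →ₗ[ℂ] Matrix (Fin d₂) (Fin d₂) ℂ) :
    Matrix (Fin d₁ × Fin d₂) (Fin d₁ × Fin d₂) ℂ :=
  ∑ i : Fin d₁, ∑ j : Fin d₁,
    Matrix.single i j (1 : ℂ) ⊗ₖ φ (Matrix.single i j (1 : ℂ))

/-- The Schmidt rank of `ψ ∈ ℂ^{d₁} ⊗ ℂ^{d₂}`. -/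
noncomputable def schmidtRank {d₁ d₂ : ℕ} (ψ : Fin d₁ × Fin d₂ → ℂ) : ℕ :=
  sInf {r | ∃ (x : Fin r → Fin d₁ → ℂ) (y : Fin r → Fin d₂ → ℂ),
    ψ = fun p => ∑ α, x α p.1 * y α p.2}

/-- `σ` is a finite sum of rank-one operators `|ψ⟩⟨ψ|` with Schmidt rank `≤ k`. -/
def SchmidtNumberLE {d₁ d₂ : ℕ} (k : ℕ)
    (σ : Matrix (Fin d₁ × Fin d₂) (Fin d₁ × Fin d₂) ℂ) : Prop :=
  ∃ (m : ℕ) (ψ : Fin m → Fin d₁ × Fin d₂ → ℂ),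
    (∀ t, schmidtRank (ψ t) ≤ k) ∧
    σ = ∑ t, Matrix.vecMulVec (ψ t) (star (ψ t))

/-- `σ` is separable: a finite sum of Kronecker products of positive semidefinite
matrices. -/
def Separable {d₁ d₂ : ℕ}
    (σ : Matrix (Fin d₁ × Fin d₂) (Fin d₁ × Fin d₂) ℂ) : Prop :=
  ∃ (m : ℕ) (σ₁ : Fin m → Matrix (Fin d₁) (Fin d₁) ℂ)
    (σ₂ : Fin m → Matrix (Fin d₂) (Fin d₂) ℂ),
    (∀ t, (σ₁ t).PosSemidef) ∧ (∀ t, (σ₂ t).PosSemidef) ∧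
    σ = ∑ t, σ₁ t ⊗ₖ σ₂ t

/-!
Expanding `φ M` in the matrix units gives `(φ M) b c = ∑ i j, M i j * φ̂ (i, b) (j, c)`. Consequently
the quadratic form of `(id_k ⊗ φ)(|x⟩⟨x|)` at `y` equals `⟨ψ, φ̂ ψ⟩` for `ψ = ∑ α, x̄_α ⊗ y_α`, and
these `ψ` are exactly the vectors of Schmidt rank at most `k`. Since positive semidefinite matrices
are sums of rank-one matrices `|v⟩⟨v|`, and a complex matrix with nonnegative quadratic form is
automatically Hermitian, `k`-positivity amounts to `⟨ψ, φ̂ ψ⟩ ≥ 0` for `SR(ψ) ≤ k`, i.e. to the trace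
condition. For positivity one uses instead `tr((A ⊗ B) φ̂) = tr(B φ(Aᵀ))`.
-/

theorem Matrix.posSemidef_iff_forall_dotProduct_mulVec_nonneg {n : Type*} [Fintype n]
    [DecidableEq n] {M : Matrix n n ℂ} :
    M.PosSemidef ↔ ∀ x, 0 ≤ star x ⬝ᵥ (M *ᵥ x) := by
  refine ⟨fun h => h.dotProduct_mulVec_nonneg, fun h => ?_⟩
  rw [← isPositive_toEuclideanLin_iff, LinearMap.isPositive_iff_complex]
  intro x
  have hx := h x.ofLp
  have hself : star (star x.ofLp ⬝ᵥ (M *ᵥ x.ofLp)) = _ := IsSelfAdjoint.of_nonneg hx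
  rw [EuclideanSpace.inner_eq_star_dotProduct, Matrix.ofLp_toLpLin, toLin'_apply,
    dotProduct_comm, star_dotProduct, hself]
  exact ⟨Complex.conj_eq_iff_re.mp hself, (Complex.nonneg_iff.mp hx).1⟩

theorem Matrix.trace_vecMulVec_star_mul {n : Type*} [Fintype n] (u : n → ℂ) (M : Matrix n n ℂ) :
    (vecMulVec u (star u) * M).trace = star u ⬝ᵥ (M *ᵥ u) := by
  rw [vecMulVec_mul, trace_vecMulVec, dotProduct_comm, ← dotProduct_mulVec]

theorem Matrix.PosSemidef.trace_mul_nonneg {n : Type*} [Fintype n] [DecidableEq n]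
    {A B : Matrix n n ℂ} (hA : A.PosSemidef) (hB : B.PosSemidef) : 0 ≤ (A * B).trace := by
  obtain ⟨m, v, rfl⟩ := posSemidef_iff_eq_sum_vecMulVec.mp hA
  rw [Finset.sum_mul, trace_sum]
  exact Finset.sum_nonneg fun t _ =>
    trace_vecMulVec_star_mul (v t) B ▸ hB.dotProduct_mulVec_nonneg _

/-- The ampliation `id_ι ⊗ φ`, acting on `ι × ι` block matrices. -/
def ampliation {ι m n R : Type*} [CommSemiring R] (φ : Matrix m m R →ₗ[R] Matrix n n R) :
    Matrix (ι × m) (ι × m) R →ₗ[R] Matrix (ι × n) (ι × n) R where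
  toFun a := of fun p q => φ (of fun x y => a (p.1, x) (q.1, y)) p.2 q.2
  map_add' a b := by
    ext p q
    show φ _ _ _ = φ _ _ _ + φ _ _ _
    rw [← Matrix.add_apply, ← map_add]
    rfl
  map_smul' c a := by
    ext p q
    show φ _ _ _ = c • φ _ _ _
    rw [← Matrix.smul_apply, ← map_smul]
    rfl

def tensorSum {ι m n : Type*} [Fintype ι] (x : ι → m → ℂ) (y : ι → n → ℂ) : m × n → ℂ :=
  fun p => ∑ α, x α p.1 * y α p.2

theorem exists_tensorSum_fin_of_le {m n : Type*} {r k : ℕ} (hrk : r ≤ k)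
    (x : Fin r → m → ℂ) (y : Fin r → n → ℂ) :
    ∃ (x' : Fin k → m → ℂ) (y' : Fin k → n → ℂ), tensorSum x y = tensorSum x' y' := by
  induction k, hrk using Nat.le_induction with
  | base => exact ⟨x, y, rfl⟩
  | succ k _ ih =>
    obtain ⟨x', y', h⟩ := ih
    refine ⟨Fin.snoc x' 0, Fin.snoc y' 0, h.trans ?_⟩
    ext p
    simp [tensorSum, Fin.sum_univ_castSucc]

section Bipartite

variable {d₁ d₂ : ℕ}

theorem exists_tensorSum_fin_left (ψ : Fin d₁ × Fin d₂ → ℂ) :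
    ∃ (x : Fin d₁ → Fin d₁ → ℂ) (y : Fin d₁ → Fin d₂ → ℂ), ψ = tensorSum x y :=
  ⟨fun α i => if α = i then 1 else 0, fun α b => ψ (α, b), by ext p; simp [tensorSum]⟩

theorem exists_tensorSum_fin_right (ψ : Fin d₁ × Fin d₂ → ℂ) :
    ∃ (x : Fin d₂ → Fin d₁ → ℂ) (y : Fin d₂ → Fin d₂ → ℂ), ψ = tensorSum x y :=
  ⟨fun α i => ψ (i, α), fun α b => if α = b then 1 else 0, by ext p; simp [tensorSum]⟩

theorem schmidtRank_le_iff {ψ : Fin d₁ × Fin d₂ → ℂ} {k : ℕ} :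
    schmidtRank ψ ≤ k ↔
      ∃ (x : Fin k → Fin d₁ → ℂ) (y : Fin k → Fin d₂ → ℂ), ψ = tensorSum x y := by
  refine ⟨fun h => ?_, fun ⟨x, y, h⟩ => Nat.sInf_le ⟨x, y, h⟩⟩
  have hne : {r | ∃ (x : Fin r → Fin d₁ → ℂ) (y : Fin r → Fin d₂ → ℂ),
      ψ = tensorSum x y}.Nonempty := ⟨d₁, exists_tensorSum_fin_left ψ⟩
  obtain ⟨x, y, hxy⟩ := Nat.sInf_mem hne
  obtain ⟨x', y', h'⟩ := exists_tensorSum_fin_of_le h x y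
  exact ⟨x', y', hxy.trans h'⟩

theorem schmidtRank_le_min (ψ : Fin d₁ × Fin d₂ → ℂ) : schmidtRank ψ ≤ min d₁ d₂ :=
  le_min (schmidtRank_le_iff.mpr (exists_tensorSum_fin_left ψ))
    (schmidtRank_le_iff.mpr (exists_tensorSum_fin_right ψ))

theorem forall_schmidtNumberLE_trace_mul_nonneg_iff (k : ℕ)
    (C : Matrix (Fin d₁ × Fin d₂) (Fin d₁ × Fin d₂) ℂ) :
    (∀ σ : Matrix (Fin d₁ × Fin d₂) (Fin d₁ × Fin d₂) ℂ,
        σ.PosSemidef → SchmidtNumberLE k σ → 0 ≤ (σ * C).trace) ↔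
      ∀ ψ, schmidtRank ψ ≤ k → 0 ≤ star ψ ⬝ᵥ (C *ᵥ ψ) := by
  refine ⟨fun h ψ hψ => ?_, fun h σ _ ⟨m, ψ, hψ, hσ⟩ => ?_⟩
  · rw [← trace_vecMulVec_star_mul]
    exact h _ (posSemidef_vecMulVec_self_star ψ) ⟨1, fun _ => ψ, fun _ => hψ, by simp⟩
  · rw [hσ, Finset.sum_mul, trace_sum]
    exact Finset.sum_nonneg fun t _ => trace_vecMulVec_star_mul (ψ t) C ▸ h _ (hψ t)

variable (φ : Matrix (Fin d₁) (Fin d₁) ℂ →ₗ[ℂ] Matrix (Fin d₂) (Fin d₂) ℂ)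

theorem choiMatrix_apply (P Q : Fin d₁ × Fin d₂) :
    choiMatrix φ P Q = φ (single P.1 Q.1 1) P.2 Q.2 := by
  simp [choiMatrix, Matrix.sum_apply, single, ite_and]

theorem apply_apply_eq_sum_choiMatrix (M : Matrix (Fin d₁) (Fin d₁) ℂ) (b c : Fin d₂) :
    φ M b c = ∑ i, ∑ j, M i j * choiMatrix φ (i, b) (j, c) := by
  conv_lhs => rw [matrix_eq_sum_single M]
  simp only [map_sum, Matrix.sum_apply]
  refine Finset.sum_congr rfl fun i _ => Finset.sum_congr rfl fun j _ => ?_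
  rw [choiMatrix_apply, show single i j (M i j) = M i j • single i j 1 by simp, map_smul,
    Matrix.smul_apply, smul_eq_mul]

theorem ampliation_apply_eq_sum_choiMatrix {ι : Type*} (a : Matrix (ι × Fin d₁) (ι × Fin d₁) ℂ)
    (p q : ι × Fin d₂) :
    ampliation φ a p q = ∑ i, ∑ j, a (p.1, i) (q.1, j) * choiMatrix φ (i, p.2) (j, q.2) :=
  apply_apply_eq_sum_choiMatrix φ _ _ _

theorem star_dotProduct_ampliation_mulVec {ι : Type*} [Fintype ι]
    (x : ι → Fin d₁ → ℂ) (y : ι → Fin d₂ → ℂ) :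
    star (Function.uncurry y) ⬝ᵥ
        (ampliation φ (vecMulVec (Function.uncurry x) (star (Function.uncurry x))) *ᵥ
          Function.uncurry y) =
      star (tensorSum (star x) y) ⬝ᵥ (choiMatrix φ *ᵥ tensorSum (star x) y) := by
  simp only [dotProduct, mulVec, ampliation_apply_eq_sum_choiMatrix, tensorSum, vecMulVec_apply,
    Function.uncurry, Pi.star_apply, star_sum, star_mul', star_star, Fintype.sum_prod_type,
    Finset.mul_sum, Finset.sum_mul]
  simp only [← Fintype.sum_prod_type']
  exact Fintype.sum_equiv
    ⟨fun ⟨α, b, β, c, i, j⟩ => ⟨i, b, j, c, β, α⟩, fun ⟨i, b, j, c, β, α⟩ => ⟨α, b, β, c, i, j⟩,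
      fun _ => rfl, fun _ => rfl⟩ _ _ fun _ => by simp only [Equiv.coe_fn_mk]; ring

theorem trace_kronecker_mul_choiMatrix (A : Matrix (Fin d₁) (Fin d₁) ℂ)
    (B : Matrix (Fin d₂) (Fin d₂) ℂ) :
    ((A ⊗ₖ B) * choiMatrix φ).trace = (B * φ Aᵀ).trace := by
  simp only [trace, diag, mul_apply, kroneckerMap_apply, apply_apply_eq_sum_choiMatrix,
    transpose_apply, Fintype.sum_prod_type, Finset.mul_sum]
  simp only [← Fintype.sum_prod_type']
  exact Fintype.sum_equiv
    ⟨fun ⟨i, b, j, c⟩ => ⟨b, c, j, i⟩, fun ⟨b, c, j, i⟩ => ⟨i, b, j, c⟩, fun _ => rfl, fun _ => rfl⟩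
    _ _ fun _ => by simp only [Equiv.coe_fn_mk]; ring

theorem kPositive_iff_forall_schmidtRank_le {k : ℕ} :
    kPositive d₁ d₂ k φ ↔ ∀ ψ, schmidtRank ψ ≤ k → 0 ≤ star ψ ⬝ᵥ (choiMatrix φ *ᵥ ψ) := by
  change (∀ a, a.PosSemidef → (ampliation (ι := Fin k) φ a).PosSemidef) ↔ _
  refine ⟨fun h ψ hψ => ?_, fun h a ha => ?_⟩
  · obtain ⟨x, y, rfl⟩ := schmidtRank_le_iff.mp hψ
    have hquad := star_dotProduct_ampliation_mulVec φ (star x) y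
    rw [star_star] at hquad
    exact hquad ▸ (h _ (posSemidef_vecMulVec_self_star _)).dotProduct_mulVec_nonneg _
  · obtain ⟨m, v, rfl⟩ := posSemidef_iff_eq_sum_vecMulVec.mp ha
    refine posSemidef_iff_forall_dotProduct_mulVec_nonneg.mpr fun w => ?_
    rw [map_sum, sum_mulVec, dotProduct_sum]
    refine Finset.sum_nonneg fun t _ => ?_
    have hquad := star_dotProduct_ampliation_mulVec φ (Function.curry (v t)) (Function.curry w)
    simp only [Function.uncurry_curry] at hquad
    exact hquad ▸ h _ (schmidtRank_le_iff.mpr ⟨_, _, rfl⟩)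

theorem positive_iff_forall_separable_trace_mul_choiMatrix_nonneg :
    (∀ a : Matrix (Fin d₁) (Fin d₁) ℂ, a.PosSemidef → (φ a).PosSemidef) ↔
      ∀ σ : Matrix (Fin d₁ × Fin d₂) (Fin d₁ × Fin d₂) ℂ,
        σ.PosSemidef → Separable σ → 0 ≤ (σ * choiMatrix φ).trace := by
  refine ⟨fun h σ _ ⟨m, σ₁, σ₂, h₁, h₂, hσ⟩ => ?_, fun h a ha => ?_⟩
  · rw [hσ, Finset.sum_mul, trace_sum]
    exact Finset.sum_nonneg fun t _ => trace_kronecker_mul_choiMatrix φ _ _ ▸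
      (h₂ t).trace_mul_nonneg (h _ (h₁ t).transpose)
  · refine posSemidef_iff_forall_dotProduct_mulVec_nonneg.mpr fun u => ?_
    have hσ := ha.transpose.kronecker (posSemidef_vecMulVec_self_star u)
    have htrace := h _ hσ ⟨1, fun _ => aᵀ, fun _ => vecMulVec u (star u), fun _ => ha.transpose,
      fun _ => posSemidef_vecMulVec_self_star u, by simp⟩
    rwa [trace_kronecker_mul_choiMatrix, transpose_transpose, trace_vecMulVec_star_mul] at htrace

end Bipartite

theorem kPositive_iff_trace_schmidt_general (d₁ d₂ k : ℕ)
    (φ : Matrix (Fin d₁) (Fin d₁) ℂ →ₗ[ℂ] Matrix (Fin d₂) (Fin d₂) ℂ) :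
    -- φ is k-positive iff tr(σ φ̂) ≥ 0 for every PSD σ of Schmidt number ≤ k
    (kPositive d₁ d₂ k φ ↔
      ∀ σ : Matrix (Fin d₁ × Fin d₂) (Fin d₁ × Fin d₂) ℂ,
        σ.PosSemidef → SchmidtNumberLE k σ → 0 ≤ (σ * choiMatrix φ).trace)
    ∧
    -- φ is positive iff tr(σ φ̂) ≥ 0 for every separable σ
    ((∀ a : Matrix (Fin d₁) (Fin d₁) ℂ, a.PosSemidef → (φ a).PosSemidef) ↔
      ∀ σ : Matrix (Fin d₁ × Fin d₂) (Fin d₁ × Fin d₂) ℂ,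
        σ.PosSemidef → Separable σ → 0 ≤ (σ * choiMatrix φ).trace)
    ∧
    -- φ is completely positive (min d₁ d₂ - positive) iff φ̂ is positive semidefinite
    (kPositive d₁ d₂ (min d₁ d₂) φ ↔ (choiMatrix φ).PosSemidef) := by
  refine ⟨(kPositive_iff_forall_schmidtRank_le φ).trans
      (forall_schmidtNumberLE_trace_mul_nonneg_iff k _).symm,
    positive_iff_forall_separable_trace_mul_choiMatrix_nonneg φ, ?_⟩
  rw [kPositive_iff_forall_schmidtRank_le, posSemidef_iff_forall_dotProduct_mulVec_nonneg]
  exact forall_congr' fun ψ => imp_iff_right (schmidtRank_le_min ψ)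

theorem kPositive_iff_trace_schmidt (d₁ d₂ k : ℕ) (hk1 : 1 ≤ k) (hk2 : k ≤ min d₁ d₂)
    (φ : Matrix (Fin d₁) (Fin d₁) ℂ →ₗ[ℂ] Matrix (Fin d₂) (Fin d₂) ℂ)
    (hφstar : ∀ a, φ aᴴ = (φ a)ᴴ) :
    -- φ is k-positive iff tr(σ φ̂) ≥ 0 for every PSD σ of Schmidt number ≤ k
    (kPositive d₁ d₂ k φ ↔
      ∀ σ : Matrix (Fin d₁ × Fin d₂) (Fin d₁ × Fin d₂) ℂ,
        σ.PosSemidef → SchmidtNumberLE k σ → 0 ≤ (σ * choiMatrix φ).trace)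
    ∧
    -- φ is positive iff tr(σ φ̂) ≥ 0 for every separable σ
    ((∀ a : Matrix (Fin d₁) (Fin d₁) ℂ, a.PosSemidef → (φ a).PosSemidef) ↔
      ∀ σ : Matrix (Fin d₁ × Fin d₂) (Fin d₁ × Fin d₂) ℂ,
        σ.PosSemidef → Separable σ → 0 ≤ (σ * choiMatrix φ).trace)
    ∧
    -- φ is completely positive (min d₁ d₂ - positive) iff φ̂ is positive semidefinite
    (kPositive d₁ d₂ (min d₁ d₂) φ ↔ (choiMatrix φ).PosSemidef) :=
  kPositive_iff_trace_schmidt_general d₁ d₂ k φ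
end

section
/- Let D = d₁ d₂, let F₁, …, F_D be d₂ × d₁ complex matrices with tr(F_α* F_β) = δ_{αβ}, let λ₁, …, λ_D > 0, and define the linear map φ(a) = Σ_{α=2}^{D} λ_α F_α a F_α* − λ₁ F₁ a F₁* on M_{d₁}(ℂ). Let 1 ≤ k ≤ min(d₁, d₂) and suppose 0 < g_k(F₁) < 1. If λ_α < λ₁ g_k(F₁) / (1 − g_k(F₁)) for every α ∈ {2, …, D}, then φ is not k-positive. -/
open scoped ComplexOrder
open Matrix

/-!
Let `U` be an isometry whose columns are eigenvectors of `F₁ F₁ᴴ` for its `k` largest eigenvalues,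
and evaluate `id_k ⊗ φ` on the rank-one projection onto `x = ∑ᵢ eᵢ ⊗ F₁ᴴ uᵢ`, tested against
`ξ = ∑ᵢ eᵢ ⊗ uᵢ`. The Kraus term of `F_α` contributes `λ_α |⟨G, F_α⟩|²` with `G = U Uᴴ F₁`.
As the `F_α` are an orthonormal basis, these weights add up to `‖G‖² = g_k(F₁)`, and the weight
of `F₁` is `g_k(F₁)²`; so the other weights add up to `g - g²`, and the bound on the `λ_α` makes
`⟨ξ, (id_k ⊗ φ)(x x*) ξ⟩ < λ₁ g / (1 - g) · (g - g²) - λ₁ g² = 0`.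
-/

lemma exists_embedding_sum_eq_sumKLargest {n : Type*} [Fintype n] {k : ℕ}
    (hk : k ≤ Fintype.card n) (f : n → ℝ) :
    ∃ σ : Fin k ↪ n, ∑ i, f (σ i) = sumKLargest k f := by
  have hne : {x | ∃ s : Finset n, s.card = k ∧ x = ∑ i ∈ s, f i}.Nonempty := by
    obtain ⟨s, -, hs⟩ := Finset.exists_subset_card_eq (Finset.card_univ (α := n) ▸ hk)
    exact ⟨_, s, hs, rfl⟩
  have hfin : {x | ∃ s : Finset n, s.card = k ∧ x = ∑ i ∈ s, f i}.Finite :=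
    (Set.finite_range fun s : Finset n => ∑ i ∈ s, f i).subset
      (by rintro _ ⟨s, -, rfl⟩; exact ⟨s, rfl⟩)
  obtain ⟨s, hs, hsum⟩ := hne.csSup_mem hfin
  let e := s.equivFinOfCardEq hs
  refine ⟨e.symm.toEmbedding.trans (Function.Embedding.subtype _), ?_⟩
  rw [sumKLargest, hsum, ← Finset.sum_coe_sort s, ← e.symm.sum_comp]
  rfl

lemma Matrix.IsHermitian.exists_isometry_trace_eq {𝕜 n κ : Type*} [RCLike 𝕜] [Fintype n]
    [DecidableEq n] [Fintype κ] [DecidableEq κ] {A : Matrix n n 𝕜} (hA : A.IsHermitian)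
    (σ : κ ↪ n) :
    ∃ U : Matrix n κ 𝕜, Uᴴ * U = 1 ∧ (Uᴴ * A * U).trace = ∑ i, (hA.eigenvalues (σ i) : 𝕜) := by
  set E : Matrix n n 𝕜 := (hA.eigenvectorUnitary : Matrix n n 𝕜)
  have hcompress : ∀ M : Matrix n n 𝕜,
      (E.submatrix id σ)ᴴ * M * E.submatrix id σ = (Eᴴ * M * E).submatrix σ σ := fun M => by
    rw [submatrix_mul _ _ _ _ _ Function.bijective_id,
      submatrix_mul _ _ _ _ _ Function.bijective_id, submatrix_id_id, conjTranspose_submatrix]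
  refine ⟨E.submatrix id σ, ?_, ?_⟩
  · simpa [E, ← star_eq_conjTranspose, submatrix_one_embedding] using hcompress 1
  · have hdiag : Eᴴ * A * E = diagonal (RCLike.ofReal ∘ hA.eigenvalues) := by
      rw [← star_eq_conjTranspose, ← Unitary.conjStarAlgAut_star_apply (S := 𝕜)]
      exact hA.conjStarAlgAut_star_eigenvectorUnitary
    rw [hcompress, hdiag, submatrix_diagonal_embedding, trace_diagonal]
    rfl

lemma exists_isometry_trace_eq_gk {d₂ d₁ k : ℕ} (F : Matrix (Fin d₂) (Fin d₁) ℂ) (hk : k ≤ d₂) :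
    ∃ U : Matrix (Fin d₂) (Fin k) ℂ, Uᴴ * U = 1 ∧ (Uᴴ * (F * Fᴴ) * U).trace = gk k F := by
  have hH := isHermitian_mul_conjTranspose_self F
  obtain ⟨σ, hσ⟩ := exists_embedding_sum_eq_sumKLargest (by simpa using hk) hH.eigenvalues
  obtain ⟨U, hU, htr⟩ := hH.exists_isometry_trace_eq σ
  refine ⟨U, hU, ?_⟩
  rw [htr, gk, ← hσ]
  push_cast
  rfl

section Parseval
variable {𝕜 ι m n : Type*} [RCLike 𝕜] [Fintype ι] [Fintype m] [Fintype n]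

open scoped InnerProductSpace

lemma Matrix.inner_toLp_eq_trace_conjTranspose_mul (A B : Matrix m n 𝕜) :
    ⟪WithLp.toLp 2 (fun t : m × n => A t.1 t.2), WithLp.toLp 2 (fun t : m × n => B t.1 t.2)⟫_𝕜
      = (Aᴴ * B).trace := by
  simp only [PiLp.inner_apply, RCLike.inner_apply, trace, diag, mul_apply, conjTranspose_apply,
    Fintype.sum_prod_type, RCLike.star_def]
  rw [Finset.sum_comm]
  simp only [mul_comm]

lemma Matrix.sum_norm_sq_trace_conjTranspose_mul [DecidableEq ι] (F : ι → Matrix m n 𝕜)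
    (hF : ∀ α β, ((F α)ᴴ * F β).trace = if α = β then 1 else 0)
    (hcard : Fintype.card ι = Fintype.card m * Fintype.card n) (G : Matrix m n 𝕜) :
    ∑ α, ‖(Gᴴ * F α).trace‖ ^ 2 = RCLike.re (Gᴴ * G).trace := by
  let vec : Matrix m n 𝕜 → EuclideanSpace 𝕜 (m × n) := fun A => WithLp.toLp 2 fun t => A t.1 t.2
  have hon : Orthonormal 𝕜 (vec ∘ F) := orthonormal_iff_ite.mpr fun α β => by
    simpa [vec, inner_toLp_eq_trace_conjTranspose_mul] using hF α β
  have hspan : ⊤ ≤ Submodule.span 𝕜 (Set.range (vec ∘ F)) :=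
    (hon.linearIndependent.span_eq_top_of_card_eq_finrank' (by simp [hcard])).ge
  have := (OrthonormalBasis.mk hon hspan).sum_sq_norm_inner_left (vec G)
  simp only [OrthonormalBasis.coe_mk, Function.comp_apply, vec,
    inner_toLp_eq_trace_conjTranspose_mul] at this
  rw [this, @norm_sq_eq_re_inner 𝕜, inner_toLp_eq_trace_conjTranspose_mul]

end Parseval

section AmpliationForm
variable {𝕜 n₁ n₂ κ : Type*} [RCLike 𝕜] [Fintype n₁] [Fintype n₂] [Fintype κ]

/-- `⟨ξ, (id_κ ⊗ Φ)(x x*) ξ⟩` for `x = ∑ᵢ eᵢ ⊗ X.col i` and `ξ = ∑ᵢ eᵢ ⊗ Ξ.col i`. -/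
def ampliationForm (X : Matrix n₁ κ 𝕜) (Ξ : Matrix n₂ κ 𝕜) :
    (Matrix n₁ n₁ 𝕜 → Matrix n₂ n₂ 𝕜) →ₗ[𝕜] 𝕜 where
  toFun Φ := ∑ i, ∑ j, star (Ξ.col i) ⬝ᵥ Φ (vecMulVec (X.col i) (star (X.col j))) *ᵥ Ξ.col j
  map_add' Φ Ψ := by
    simp only [Pi.add_apply, add_mulVec, dotProduct_add, Finset.sum_add_distrib]
  map_smul' c Φ := by
    simp only [Pi.smul_apply, smul_mulVec, dotProduct_smul, smul_eq_mul, Finset.mul_sum,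
      RingHom.id_apply]

lemma ampliationForm_conj (X : Matrix n₁ κ 𝕜) (Ξ : Matrix n₂ κ 𝕜) (K : Matrix n₂ n₁ 𝕜) :
    ampliationForm X Ξ (fun a => K * a * Kᴴ) = (‖((Ξ * Xᴴ)ᴴ * K).trace‖ ^ 2 : ℝ) := by
  have hdiag : ∀ i, (Ξᴴ * K * X) i i = star (Ξ.col i) ⬝ᵥ K *ᵥ X.col i := fun i => by
    rw [Matrix.mul_assoc, mul_apply, dotProduct]
    rfl
  have hstar : ∀ i, star (star (Ξ.col i) ⬝ᵥ K *ᵥ X.col i) = star (X.col i) ᵥ* Kᴴ ⬝ᵥ Ξ.col i :=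
    fun i => by rw [← star_dotProduct_star, star_mulVec, star_star, dotProduct_comm]
  have htrace : ((Ξ * Xᴴ)ᴴ * K).trace = (Ξᴴ * K * X).trace := by
    rw [conjTranspose_mul, conjTranspose_conjTranspose, Matrix.mul_assoc, trace_mul_comm,
      Matrix.mul_assoc]
  rw [htrace, RCLike.ofReal_pow, ← RCLike.mul_conj, ← RCLike.star_def]
  simp only [ampliationForm, LinearMap.coe_mk, AddHom.coe_mk, mul_vecMulVec, vecMulVec_mul,
    vecMulVec_mulVec, dotProduct_smul, op_smul_eq_mul, trace, diag, star_sum, hdiag, hstar,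
    Finset.sum_mul_sum]

end AmpliationForm

lemma kPositive.ampliationForm_nonneg {d₁ d₂ k : ℕ}
    {φ : Matrix (Fin d₁) (Fin d₁) ℂ →ₗ[ℂ] Matrix (Fin d₂) (Fin d₂) ℂ} (hφ : kPositive d₁ d₂ k φ)
    (X : Matrix (Fin d₁) (Fin k) ℂ) (Ξ : Matrix (Fin d₂) (Fin k) ℂ) :
    0 ≤ ampliationForm X Ξ φ := by
  let x : Fin k × Fin d₁ → ℂ := fun p => X p.2 p.1
  have := (hφ _ (posSemidef_vecMulVec_self_star x)).dotProduct_mulVec_nonneg fun p => Ξ p.2 p.1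
  convert this using 1
  simp only [ampliationForm, LinearMap.coe_mk, AddHom.coe_mk, dotProduct, mulVec,
    Fintype.sum_prod_type, Finset.mul_sum]
  refine Finset.sum_congr rfl fun i _ => ?_
  rw [Finset.sum_comm]
  rfl

lemma sum_erase_mul_sub_mul_neg {ι : Type*} [Fintype ι] [DecidableEq ι] {w lam : ι → ℝ}
    {i₀ : ι} {g : ℝ} (hw : ∀ i, 0 ≤ w i) (hsum : ∑ i, w i = g) (hw₀ : w i₀ = g ^ 2)
    (hg0 : 0 < g) (hg1 : g < 1)
    (hlam : ∀ i ∈ Finset.univ.erase i₀, lam i < lam i₀ * g / (1 - g)) :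
    ∑ i ∈ Finset.univ.erase i₀, lam i * w i - lam i₀ * w i₀ < 0 := by
  set μ := lam i₀ * g / (1 - g)
  have hrest : ∑ i ∈ Finset.univ.erase i₀, w i = g - g ^ 2 := by
    have := Finset.add_sum_erase Finset.univ w (Finset.mem_univ i₀)
    rw [hsum, hw₀] at this
    linarith
  obtain ⟨j, hj, hwj⟩ : ∃ j ∈ Finset.univ.erase i₀, (0 : ℝ) < w j :=
    Finset.exists_lt_of_sum_lt (by simp only [Finset.sum_const_zero, hrest]; nlinarith)
  have hlt : ∑ i ∈ Finset.univ.erase i₀, lam i * w i < ∑ i ∈ Finset.univ.erase i₀, μ * w i :=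
    Finset.sum_lt_sum (fun i hi => mul_le_mul_of_nonneg_right (hlam i hi).le (hw i))
      ⟨j, hj, mul_lt_mul_of_pos_right (hlam j hj) hwj⟩
  have hμ : μ * (g - g ^ 2) = lam i₀ * g ^ 2 := by
    simp only [μ]
    field_simp [(sub_pos.2 hg1).ne']
  rw [← Finset.mul_sum, hrest, hμ] at hlt
  rw [hw₀]
  linarith

theorem not_kPositive_of_spectral_condition_general (d₁ d₂ k : ℕ)
    (hk2 : k ≤ min d₁ d₂)
    (F : Fin (d₁ * d₂) → Matrix (Fin d₂) (Fin d₁) ℂ)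
    (hF : ∀ α β, ((F α)ᴴ * F β).trace = if α = β then 1 else 0)
    (lam : Fin (d₁ * d₂) → ℝ)
    (α₁ : Fin (d₁ * d₂))
    (φ : Matrix (Fin d₁) (Fin d₁) ℂ →ₗ[ℂ] Matrix (Fin d₂) (Fin d₂) ℂ)
    (hφ : ∀ a, φ a = (∑ α ∈ Finset.univ.erase α₁, (lam α : ℂ) • (F α * a * (F α)ᴴ))
        - (lam α₁ : ℂ) • (F α₁ * a * (F α₁)ᴴ))
    (hg0 : 0 < gk k (F α₁)) (hg1 : gk k (F α₁) < 1)
    (hcond : ∀ α ∈ Finset.univ.erase α₁,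
      lam α < lam α₁ * gk k (F α₁) / (1 - gk k (F α₁))) :
    ¬ kPositive d₁ d₂ k φ := by
  intro hpos
  obtain ⟨U, hU, hUg⟩ := exists_isometry_trace_eq_gk (F α₁) (hk2.trans (min_le_right _ _))
  set X := (F α₁)ᴴ * U
  set G := U * Xᴴ
  have hGG : Gᴴ * G = Gᴴ * F α₁ := by
    simp only [G, X, conjTranspose_mul, conjTranspose_conjTranspose, Matrix.mul_assoc]
    rw [← Matrix.mul_assoc Uᴴ U, hU, Matrix.one_mul]
  have hG₁ : (Gᴴ * F α₁).trace = gk k (F α₁) := by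
    rw [← hUg]
    simp only [G, X, conjTranspose_mul, conjTranspose_conjTranspose, Matrix.mul_assoc]
    rw [trace_mul_comm, Matrix.mul_assoc, trace_mul_comm]
    simp only [Matrix.mul_assoc]
  have hφ_kraus : (φ : Matrix (Fin d₁) (Fin d₁) ℂ → Matrix (Fin d₂) (Fin d₂) ℂ)
      = ∑ α ∈ Finset.univ.erase α₁,
          (lam α : ℂ) • (fun (a : Matrix (Fin d₁) (Fin d₁) ℂ) => F α * a * (F α)ᴴ)
        - (lam α₁ : ℂ) • (fun (a : Matrix (Fin d₁) (Fin d₁) ℂ) => F α₁ * a * (F α₁)ᴴ) := by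
    funext a
    simp only [hφ, Pi.sub_apply, Finset.sum_apply, Pi.smul_apply]
  have hform := hpos.ampliationForm_nonneg X U
  simp only [hφ_kraus, map_sub, map_sum, map_smul, ampliationForm_conj, smul_eq_mul,
    RCLike.ofReal_eq_complex_ofReal] at hform
  norm_cast at hform
  have hparseval := sum_norm_sq_trace_conjTranspose_mul F hF (by simp [mul_comm]) G
  rw [hGG, hG₁, RCLike.re_to_complex, Complex.ofReal_re] at hparseval
  have hG₁_sq : ‖(Gᴴ * F α₁).trace‖ ^ 2 = gk k (F α₁) ^ 2 := by
    rw [hG₁, Complex.norm_real, Real.norm_eq_abs, sq_abs]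
  exact (sum_erase_mul_sub_mul_neg (fun α => sq_nonneg _) hparseval hG₁_sq hg0 hg1 hcond).not_ge
    hform

/-- Spectral condition for failure of `k`-positivity of
`φ(a) = ∑_{α≥2} λ_α F_α a F_αᴴ − λ₁ F₁ a F₁ᴴ`. -/
theorem not_kPositive_of_spectral_condition (d₁ d₂ k : ℕ)
    (hk1 : 1 ≤ k) (hk2 : k ≤ min d₁ d₂)
    (F : Fin (d₁ * d₂) → Matrix (Fin d₂) (Fin d₁) ℂ)
    (hF : ∀ α β, ((F α)ᴴ * F β).trace = if α = β then 1 else 0)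
    (lam : Fin (d₁ * d₂) → ℝ) (hlam : ∀ α, 0 < lam α)
    (α₁ : Fin (d₁ * d₂)) (hα₁ : (α₁ : ℕ) = 0)
    (φ : Matrix (Fin d₁) (Fin d₁) ℂ →ₗ[ℂ] Matrix (Fin d₂) (Fin d₂) ℂ)
    (hφ : ∀ a, φ a = (∑ α ∈ Finset.univ.erase α₁, (lam α : ℂ) • (F α * a * (F α)ᴴ))
        - (lam α₁ : ℂ) • (F α₁ * a * (F α₁)ᴴ))
    (hg0 : 0 < gk k (F α₁)) (hg1 : gk k (F α₁) < 1)
    (hcond : ∀ α ∈ Finset.univ.erase α₁,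
      lam α < lam α₁ * gk k (F α₁) / (1 - gk k (F α₁))) :
    ¬ kPositive d₁ d₂ k φ :=
  not_kPositive_of_spectral_condition_general d₁ d₂ k hk2 F hF lam α₁ φ hφ hg0 hg1 hcond
end

section
/- For d ≥ 2, let S = Σ_{i,j=1}^{d} E_{ij} ⊗ E_{ji} ∈ M_{d²}(ℂ) (the swap operator) and F₀ = (I_{d²} − S)/√(2d(d−1)). Then: (i) F₀ = F₀* and tr(F₀²) = 1; (ii) ‖F₀‖² = 2/(d(d−1)), where ‖·‖ is the operator norm; (iii) for all rank-one orthogonal projections p, q ∈ M_d(ℂ), tr[(p ⊗ q) F₀²] = (1 − tr(p q))/(d(d−1)); and (iv) the maximum of tr[(p ⊗ q) F₀²] over all rank-one orthogonal projections p, q ∈ M_d(ℂ) equals 1/(d(d−1)). -/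
/-!
The swap operator `S` is a self-adjoint involution with `tr S = d` and
`tr((p ⊗ q) S) = tr(p q)`. Hence `(1 - S)² = 2 (1 - S)`, so `F₀² = (1 - S) / (d(d-1))`, and all
four claims are read off this formula: the trace from `tr(1 - S) = d² - d`, the norm from the
C*-identity `‖F₀‖² = ‖F₀²‖` together with `‖1 - S‖ = 2` (as `(1 - S)/2` is a nonzero projection),
and the maximum from `tr(p q) = tr((q p)ᴴ (q p)) ≥ 0`, with equality for two orthogonal
coordinate projections.
-/

open scoped Kronecker ComplexOrder
open Matrix

/-- `p` is a rank-one orthogonal projection. -/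
def IsRankOneProj {m : Type*} [Fintype m] [DecidableEq m]
    (p : Matrix m m ℂ) : Prop :=
  p.IsHermitian ∧ p * p = p ∧ p.trace = 1

/-- The swap operator `S = ∑ i j, E_{ij} ⊗ E_{ji}` on `ℂ^d ⊗ ℂ^d`. -/
noncomputable def swapMatrix (d : ℕ) :
    Matrix (Fin d × Fin d) (Fin d × Fin d) ℂ :=
  ∑ i : Fin d, ∑ j : Fin d,
    Matrix.single i j (1 : ℂ) ⊗ₖ Matrix.single j i (1 : ℂ)

/-- `F₀ = (I − S) / √(2d(d−1))`. -/
noncomputable def F0 (d : ℕ) : Matrix (Fin d × Fin d) (Fin d × Fin d) ℂ :=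
  (((Real.sqrt (2 * d * (d - 1)))⁻¹ : ℝ) : ℂ) • (1 - swapMatrix d)

theorem Matrix.trace_mul_nonneg_of_isStarProjection {R n : Type*} [CommRing R] [PartialOrder R]
    [StarRing R] [StarOrderedRing R] [Fintype n] {p q : Matrix n n R}
    (hp : IsStarProjection p) (hq : IsStarProjection q) : 0 ≤ (p * q).trace := by
  have hpqp : (q * p)ᴴ * (q * p) = p * q * p := by
    have hp' : pᴴ = p := hp.isSelfAdjoint
    have hq' : qᴴ = q := hq.isSelfAdjoint
    rw [conjTranspose_mul, hp', hq', Matrix.mul_assoc, ← Matrix.mul_assoc q,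
      hq.isIdempotentElem.eq, Matrix.mul_assoc]
  have hpqp_trace : (p * q * p).trace = (p * q).trace := by
    rw [trace_mul_comm, ← Matrix.mul_assoc, hp.isIdempotentElem.eq]
  rw [← hpqp_trace, ← hpqp]
  exact (posSemidef_conjTranspose_mul_self _).trace_nonneg

theorem IsSelfAdjoint.norm_eq_of_mul_self_eq_smul {𝕜 E : Type*} [NormedField 𝕜]
    [NormedRing E] [StarRing E] [CStarRing E] [Module 𝕜 E] [NormSMulClass 𝕜 E] {a : E}
    (ha : IsSelfAdjoint a) (ha0 : a ≠ 0) {c : 𝕜} (h : a * a = c • a) : ‖a‖ = ‖c‖ := by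
  have hsq : ‖a‖ * ‖a‖ = ‖c‖ * ‖a‖ := by
    rw [← sq, ← ha.norm_mul_self, h, norm_smul]
  exact mul_right_cancel₀ (norm_ne_zero_iff.mpr ha0) hsq

theorem IsRankOneProj.isStarProjection {m : Type*} [Fintype m] [DecidableEq m]
    {p : Matrix m m ℂ} (hp : IsRankOneProj p) : IsStarProjection p :=
  ⟨hp.2.1, hp.1⟩

theorem isRankOneProj_single {m : Type*} [Fintype m] [DecidableEq m] (i : m) :
    IsRankOneProj (single i i (1 : ℂ)) := by
  refine ⟨?_, by rw [single_mul_single_same, mul_one], trace_single_eq_same i 1⟩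
  ext a b
  simp [single, and_comm, apply_ite (star : ℂ → ℂ)]

theorem swapMatrix_apply (d : ℕ) (x y : Fin d × Fin d) :
    swapMatrix d x y = if x.swap = y then 1 else 0 := by
  obtain ⟨a, b⟩ := x; obtain ⟨c, e⟩ := y
  simp [swapMatrix, Matrix.sum_apply, Matrix.single, ite_and, Prod.ext_iff, eq_comm, and_comm]

theorem swapMatrix_isHermitian (d : ℕ) : (swapMatrix d).IsHermitian := by
  ext x y
  simp only [conjTranspose_apply, swapMatrix_apply, Prod.swap_eq_iff_eq_swap, eq_comm (a := x)]
  split_ifs <;> simp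

theorem swapMatrix_mul_self (d : ℕ) : swapMatrix d * swapMatrix d = 1 := by
  ext x y
  simp only [mul_apply, swapMatrix_apply, ite_mul, one_mul, zero_mul, Finset.sum_ite_eq,
    Finset.mem_univ, if_true, Prod.swap_swap, one_apply]

theorem trace_swapMatrix (d : ℕ) : (swapMatrix d).trace = d := by
  simp [trace, swapMatrix_apply, Fintype.sum_prod_type, Prod.ext_iff, ite_and]

theorem trace_kronecker_mul_swapMatrix (d : ℕ) (p q : Matrix (Fin d) (Fin d) ℂ) :
    ((p ⊗ₖ q) * swapMatrix d).trace = (p * q).trace := by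
  simp [trace, mul_apply, swapMatrix_apply, Fintype.sum_prod_type, Prod.ext_iff, ite_and]

theorem natCast_mul_sub_one_pos {d : ℕ} (hd : 2 ≤ d) : (0 : ℝ) < d * (d - 1) := by
  have : (2 : ℝ) ≤ d := by exact_mod_cast hd
  nlinarith

theorem one_sub_swapMatrix_mul_self (d : ℕ) :
    (1 - swapMatrix d) * (1 - swapMatrix d) = (2 : ℂ) • (1 - swapMatrix d) := by
  rw [sub_mul, mul_sub, mul_sub, one_mul, one_mul, mul_one, swapMatrix_mul_self, two_smul]
  abel

theorem trace_one_sub_swapMatrix (d : ℕ) :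
    (1 - swapMatrix d).trace = d * (d - 1) := by
  rw [trace_sub, trace_one, trace_swapMatrix, Fintype.card_prod, Fintype.card_fin]
  push_cast
  ring

theorem F0_sq (d : ℕ) :
    F0 d ^ 2 = ((((d : ℝ) * (d - 1))⁻¹ : ℝ) : ℂ) • (1 - swapMatrix d) := by
  have hd : (0 : ℝ) ≤ d * (d - 1) := by
    rcases d with _ | d <;> push_cast <;> nlinarith
  rw [F0, smul_pow, sq (1 - swapMatrix d), one_sub_swapMatrix_mul_self, smul_smul]
  congr 1
  rw [← Complex.ofReal_pow, ← Complex.ofReal_ofNat, ← Complex.ofReal_mul, inv_pow,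
    Real.sq_sqrt (by linarith), mul_assoc, _root_.mul_inv_rev, inv_mul_cancel_right₀ two_ne_zero]

theorem F0_isHermitian (d : ℕ) : (F0 d).IsHermitian := by
  rw [F0, IsHermitian, conjTranspose_smul, Complex.star_def, Complex.conj_ofReal]
  exact congrArg _ (isHermitian_one.sub (swapMatrix_isHermitian d))

theorem trace_kronecker_mul_F0_sq (d : ℕ) (p q : Matrix (Fin d) (Fin d) ℂ) :
    ((p ⊗ₖ q) * F0 d ^ 2).trace = (p.trace * q.trace - (p * q).trace) / (d * (d - 1)) := by
  rw [F0_sq, Matrix.mul_smul, trace_smul, Matrix.mul_sub, trace_sub, Matrix.mul_one,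
    trace_kronecker, trace_kronecker_mul_swapMatrix, smul_eq_mul]
  push_cast
  ring

section L2OpNorm

open scoped Matrix.Norms.L2Operator

theorem opNorm_eq_norm {n : Type*} [Fintype n] [DecidableEq n] (A : Matrix n n ℂ) :
    opNorm A = ‖A‖ := rfl

theorem norm_one_sub_swapMatrix {d : ℕ} (hd : 2 ≤ d) : ‖1 - swapMatrix d‖ = 2 := by
  have hne : 1 - swapMatrix d ≠ 0 := by
    intro h
    have htrace := trace_one_sub_swapMatrix d
    rw [h, trace_zero] at htrace
    exact (natCast_mul_sub_one_pos hd).ne (by exact_mod_cast htrace)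
  simpa using (isHermitian_one.sub (swapMatrix_isHermitian d)).isSelfAdjoint
    |>.norm_eq_of_mul_self_eq_smul hne (one_sub_swapMatrix_mul_self d)

theorem sq_opNorm_F0 {d : ℕ} (hd : 2 ≤ d) : opNorm (F0 d) ^ 2 = 2 / (d * (d - 1)) := by
  rw [opNorm_eq_norm, ← (F0_isHermitian d).isSelfAdjoint.norm_mul_self, ← sq, F0_sq,
    norm_smul, norm_one_sub_swapMatrix hd, Complex.norm_real, Real.norm_eq_abs,
    abs_of_pos (inv_pos.mpr (natCast_mul_sub_one_pos hd))]
  ring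

end L2OpNorm

theorem F0_properties (d : ℕ) (hd : 2 ≤ d) :
    -- (i) F₀ is Hermitian with tr(F₀²) = 1
    ((F0 d)ᴴ = F0 d ∧ (F0 d ^ 2).trace = 1)
    ∧
    -- (ii) ‖F₀‖² = 2/(d(d−1))
    (opNorm (F0 d) ^ 2 = 2 / ((d : ℝ) * ((d : ℝ) - 1)))
    ∧
    -- (iii) tr[(p ⊗ q) F₀²] = (1 − tr(pq))/(d(d−1)) for rank-one projections p, q
    (∀ p q : Matrix (Fin d) (Fin d) ℂ, IsRankOneProj p → IsRankOneProj q →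
      ((p ⊗ₖ q) * F0 d ^ 2).trace =
        (1 - (p * q).trace) / ((d : ℂ) * ((d : ℂ) - 1)))
    ∧
    -- (iv) the maximum of tr[(p ⊗ q) F₀²] over rank-one projections is 1/(d(d−1))
    IsGreatest {x : ℝ | ∃ p q : Matrix (Fin d) (Fin d) ℂ,
        IsRankOneProj p ∧ IsRankOneProj q ∧
        ((p ⊗ₖ q) * F0 d ^ 2).trace = (x : ℂ)}
      (1 / ((d : ℝ) * ((d : ℝ) - 1))) := by
  have hD := natCast_mul_sub_one_pos hd
  have hDℂ : (d : ℂ) * (d - 1) ≠ 0 := by exact_mod_cast hD.ne'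
  have formula (p q : Matrix (Fin d) (Fin d) ℂ) (hp : IsRankOneProj p) (hq : IsRankOneProj q) :
      ((p ⊗ₖ q) * F0 d ^ 2).trace = (1 - (p * q).trace) / (d * (d - 1)) := by
    rw [trace_kronecker_mul_F0_sq, hp.2.2, hq.2.2, one_mul]
  refine ⟨⟨F0_isHermitian d, ?_⟩, sq_opNorm_F0 hd, formula, ?_, ?_⟩
  · rw [F0_sq, trace_smul, trace_one_sub_swapMatrix, smul_eq_mul]
    push_cast
    exact inv_mul_cancel₀ hDℂ
  · let i : Fin d := ⟨0, by omega⟩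
    let j : Fin d := ⟨1, by omega⟩
    have hij : i ≠ j := by simp [i, j, Fin.ext_iff]
    refine ⟨single i i 1, single j j 1, isRankOneProj_single i, isRankOneProj_single j, ?_⟩
    rw [formula _ _ (isRankOneProj_single i) (isRankOneProj_single j),
      single_mul_single_of_ne (h := hij), trace_zero]
    push_cast
    ring
  · rintro x ⟨p, q, hp, hq, hx⟩
    have hpq : (p * q).trace = ((1 - x * (d * (d - 1)) : ℝ) : ℂ) := by
      rw [formula p q hp hq, div_eq_iff hDℂ] at hx
      push_cast
      linear_combination -hx
    have hpq_nonneg := trace_mul_nonneg_of_isStarProjection hp.isStarProjection hq.isStarProjection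
    rw [hpq, Complex.zero_le_real] at hpq_nonneg
    rw [le_div_iff₀ hD]
    linarith
end
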